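/- Let w, u ∈ F₂ be independent modulo F₂', i.e. exp_x(w)·exp_y(u) − exp_y(w)·exp_x(u) ≠ 0. Then for every k ≥ 2 the equation [w,u] = z^k has no solution in M₂ = F₂/F₂'': there is no z ∈ F₂ with [w,u]·z^{-k} ∈ F₂''. (Baumslag–Neumann–Neumann–Neumann.) -/

import Mathlib

/-- The total exponent of `x` in a word of the free group on `{x, y}`. -/
def expx (w : FreeGroup (Fin 2)) : ℤ :=
  Multiplicative.toAdd
    (FreeGroup.lift (fun i => Multiplicative.ofAdd (if i = 0 then (1 : ℤ) else 0)) w)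

/-- The total exponent of `y` in a word of the free group on `{x, y}`. -/
def expy (w : FreeGroup (Fin 2)) : ℤ :=
  Multiplicative.toAdd
    (FreeGroup.lift (fun i => Multiplicative.ofAdd (if i = 1 then (1 : ℤ) else 0)) w)

open scoped commutatorElement

/-!
The Magnus embedding `x ↦ ⟨1, 0, (1, 0)⟩`, `y ↦ ⟨0, 1, (0, 1)⟩` maps `F₂` into a metabelian group
of triples (Fox derivatives `∂ₓ`, `∂ᵧ` in the Laurent ring `R[ℤ²] = R[X^±, Y^±]`, abelianization in
`ℤ²`), so it factors through `M₂`. Take `R = 𝔽_p` for a prime `p ∣ k`. If `[w, u] ≡ z^k`, then `z`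
has degree `0` because `ℤ²` is torsion-free, so its image has exponent `p` and the images of `w` and
`u` commute. Writing `α, β` for their degrees, commutation says `(1 - t^β) ∂w + (t^α - 1) ∂u = 0`
for both derivatives. The ring endomorphism induced by the adjugate of the matrix with columns
`α, β` sends `t^α, t^β` to `X^D, Y^D` with `D = det (α β) ≠ 0`, and reducing `Y`-exponents modulo
`D` shows that `Y^D - 1` divides the images of `∂ₓu` and `∂ᵧu`. Cancelling `Y^D - 1` in the
fundamental formula `∂ₓu (X - 1) + ∂ᵧu (Y - 1) = t^β - 1` puts `1` in the augmentation ideal.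
-/

open AddMonoidAlgebra

section LaurentRing

variable {R : Type*} [CommRing R]

-- The Laurent monomial `t^v = X^v.1 Y^v.2`.
noncomputable def tpow (v : ℤ × ℤ) : R[ℤ × ℤ] := single v 1

@[simp] lemma tpow_zero : (tpow 0 : R[ℤ × ℤ]) = 1 := rfl

lemma tpow_add (v w : ℤ × ℤ) : (tpow (v + w) : R[ℤ × ℤ]) = tpow v * tpow w := by
  simp [tpow, single_mul_single]

lemma tpow_neg_mul_tpow (v : ℤ × ℤ) : (tpow (-v) : R[ℤ × ℤ]) * tpow v = 1 := by
  rw [← tpow_add, neg_add_cancel, tpow_zero]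

lemma tpow_nsmul (n : ℕ) (v : ℤ × ℤ) : (tpow (n • v) : R[ℤ × ℤ]) = tpow v ^ n := by
  simp [tpow, single_pow]

lemma tpow_sub_one_ne_zero [Nontrivial R] {v : ℤ × ℤ} (hv : v ≠ 0) :
    (tpow v : R[ℤ × ℤ]) - 1 ≠ 0 := by
  rw [sub_ne_zero, one_def, tpow, Ne, single_left_inj one_ne_zero]
  exact hv

lemma tpow_sub_one_dvd_tpow_zsmul_sub_one (m : ℤ) (v : ℤ × ℤ) :
    (tpow v : R[ℤ × ℤ]) - 1 ∣ tpow (m • v) - 1 := by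
  obtain ⟨n, rfl | rfl⟩ := Int.eq_nat_or_neg m
  · rw [natCast_zsmul, tpow_nsmul]
    simpa using sub_dvd_pow_sub_pow (tpow v : R[ℤ × ℤ]) 1 n
  · have h : (tpow (-(n : ℤ) • v) : R[ℤ × ℤ]) - 1 = -tpow (-(n • v)) * (tpow (n • v) - 1) := by
      rw [mul_sub, mul_one, neg_mul, tpow_neg_mul_tpow, neg_smul, natCast_zsmul]; ring
    rw [h, tpow_nsmul]
    exact dvd_mul_of_dvd_right (by simpa using sub_dvd_pow_sub_pow (tpow v : R[ℤ × ℤ]) 1 n) _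

lemma mul_tpow_sub_one_add_mul_tpow_sub_one_ne_one [Nontrivial R] (c₁ c₂ : R[ℤ × ℤ])
    (v w : ℤ × ℤ) : c₁ * (tpow v - 1) + c₂ * (tpow w - 1) ≠ 1 := by
  intro h
  simpa [tpow] using congrArg (Bialgebra.counitAlgHom R R[ℤ × ℤ]) h

-- A section of the quotient map by `Y^D - 1` that lands in the domain `R[ℤ²]`.
noncomputable def reduceSnd (D : ℤ) (x : R[ℤ × ℤ]) : R[ℤ × ℤ] :=
  mapDomain (fun q : ℤ × ℤ => (q.1, q.2 % D)) x

lemma reduceSnd_add (D : ℤ) (x y : R[ℤ × ℤ]) :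
    reduceSnd D (x + y) = reduceSnd D x + reduceSnd D y :=
  mapDomain_add ..

lemma reduceSnd_single (D : ℤ) (q : ℤ × ℤ) (r : R) :
    reduceSnd D (single q r) = single (q.1, q.2 % D) r :=
  mapDomain_single

lemma reduceSnd_tpow_mul {D f : ℤ} (e : ℤ) (hf : D ∣ f) (x : R[ℤ × ℤ]) :
    reduceSnd D (tpow (e, f) * x) = tpow (e, 0) * reduceSnd D x := by
  induction x using induction_linear with
  | zero => simp [reduceSnd]
  | add x y hx hy => rw [mul_add, reduceSnd_add, reduceSnd_add, hx, hy, mul_add]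
  | single q r =>
    obtain ⟨m, rfl⟩ := hf
    simp only [tpow, single_mul_single, reduceSnd_single, Prod.fst_add, Prod.snd_add, one_mul,
      Prod.mk_add_mk, zero_add, Int.add_mul_emod_self_left, add_comm (D * m)]

lemma tpow_sub_one_dvd_sub_reduceSnd (D : ℤ) (x : R[ℤ × ℤ]) :
    tpow (0, D) - 1 ∣ x - reduceSnd D x := by
  induction x using induction_linear with
  | zero => simp [reduceSnd]
  | add x y hx hy =>
    rw [reduceSnd_add, add_sub_add_comm]
    exact dvd_add hx hy
  | single q r =>
    obtain ⟨m, hm⟩ := Int.dvd_self_sub_emod (x := q.2) (m := D)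
    have hsplit : single q r - single (q.1, q.2 % D) r
        = single (q.1, q.2 % D) r * (tpow (m • (0, D)) - 1) := by
      rw [mul_sub, mul_one, tpow, single_mul_single, mul_one, Prod.smul_mk, smul_zero,
        Prod.mk_add_mk, add_zero, smul_eq_mul, mul_comm, ← hm, add_sub_cancel]
    rw [reduceSnd_single, hsplit]
    exact dvd_mul_of_dvd_right (tpow_sub_one_dvd_tpow_zsmul_sub_one m _) _

lemma tpow_sub_one_dvd_of_mul_eq_mul [IsDomain R] {D : ℤ} (hD : D ≠ 0)
    {U W : R[ℤ × ℤ]} (h : (tpow (D, 0) - 1) * U = (tpow (0, D) - 1) * W) :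
    tpow (0, D) - 1 ∣ U := by
  have h' : tpow (D, 0) * U + W = tpow (0, D) * W + U := by linear_combination h
  have hred := congrArg (reduceSnd D) h'
  rw [reduceSnd_add, reduceSnd_add, reduceSnd_tpow_mul D (dvd_zero D),
    reduceSnd_tpow_mul 0 dvd_rfl, Prod.mk_zero_zero, tpow_zero, one_mul] at hred
  have hU : reduceSnd D U = 0 := by
    have hmul : (tpow (D, 0) - 1) * reduceSnd D U = 0 := by linear_combination hred
    exact (mul_eq_zero.1 hmul).resolve_left (tpow_sub_one_ne_zero (by simpa using hD))
  simpa [hU] using tpow_sub_one_dvd_sub_reduceSnd D U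

lemma mapDomainRingHom_tpow (f : ℤ × ℤ →+ ℤ × ℤ) (v : ℤ × ℤ) :
    mapDomainRingHom R f (tpow v) = tpow (f v) := by
  simp [tpow]

end LaurentRing

def adjugateHom (α β : ℤ × ℤ) : ℤ × ℤ →+ ℤ × ℤ :=
  AddMonoidHom.mk' (fun q => (β.2 * q.1 - β.1 * q.2, α.1 * q.2 - α.2 * q.1))
    (fun p q => by ext <;> (simp only [Prod.fst_add, Prod.snd_add]; ring))

lemma adjugateHom_left (α β : ℤ × ℤ) : adjugateHom α β α = (α.1 * β.2 - α.2 * β.1, 0) := by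
  ext <;> simp [adjugateHom, mul_comm]

lemma adjugateHom_right (α β : ℤ × ℤ) : adjugateHom α β β = (0, α.1 * β.2 - α.2 * β.1) := by
  ext <;> simp [adjugateHom, mul_comm]

/-- `⟨dx, dy, deg⟩` stands for the matrix `[[t^deg, dx • a + dy • b], [0, 1]]` over `R[ℤ²]`, where
`a, b` is a basis of a free module; on the image of a word, `dx` and `dy` are its Fox derivatives and
`deg` its abelianization. -/
@[ext] structure MagnusGroup (R : Type*) [CommRing R] where
  dx : R[ℤ × ℤ]
  dy : R[ℤ × ℤ]
  deg : ℤ × ℤ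

namespace MagnusGroup

variable {R : Type*} [CommRing R]

noncomputable instance : Mul (MagnusGroup R) :=
  ⟨fun g h => ⟨g.dx + tpow g.deg * h.dx, g.dy + tpow g.deg * h.dy, g.deg + h.deg⟩⟩

noncomputable instance : One (MagnusGroup R) := ⟨⟨0, 0, 0⟩⟩

noncomputable instance : Inv (MagnusGroup R) :=
  ⟨fun g => ⟨-(tpow (-g.deg) * g.dx), -(tpow (-g.deg) * g.dy), -g.deg⟩⟩

@[simp] lemma mul_dx (g h : MagnusGroup R) : (g * h).dx = g.dx + tpow g.deg * h.dx := rfl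
@[simp] lemma mul_dy (g h : MagnusGroup R) : (g * h).dy = g.dy + tpow g.deg * h.dy := rfl
@[simp] lemma mul_deg (g h : MagnusGroup R) : (g * h).deg = g.deg + h.deg := rfl
@[simp] lemma one_dx : (1 : MagnusGroup R).dx = 0 := rfl
@[simp] lemma one_dy : (1 : MagnusGroup R).dy = 0 := rfl
@[simp] lemma one_deg : (1 : MagnusGroup R).deg = 0 := rfl
@[simp] lemma inv_dx (g : MagnusGroup R) : g⁻¹.dx = -(tpow (-g.deg) * g.dx) := rfl
@[simp] lemma inv_dy (g : MagnusGroup R) : g⁻¹.dy = -(tpow (-g.deg) * g.dy) := rfl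
@[simp] lemma inv_deg (g : MagnusGroup R) : g⁻¹.deg = -g.deg := rfl

noncomputable instance : Group (MagnusGroup R) where
  mul_assoc g h k := by ext : 1 <;> simp [mul_add, tpow_add, mul_assoc, add_assoc]
  one_mul g := by ext : 1 <;> simp
  mul_one g := by ext : 1 <;> simp
  inv_mul_cancel g := by ext : 1 <;> simp

def degHom : MagnusGroup R →* Multiplicative (ℤ × ℤ) where
  toFun g := .ofAdd g.deg
  map_one' := rfl
  map_mul' _ _ := rfl

lemma deg_eq_zero_of_mem_commutator {g : MagnusGroup R} (hg : g ∈ commutator (MagnusGroup R)) :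
    g.deg = 0 :=
  Multiplicative.ofAdd.injective (Abelianization.commutator_subset_ker degHom hg)

lemma derivedSeries_two_eq_bot : derivedSeries (MagnusGroup R) 2 = ⊥ := by
  rw [derivedSeries_succ, derivedSeries_one, eq_bot_iff, Subgroup.commutator_le]
  intro g hg h hh
  have hg₀ := deg_eq_zero_of_mem_commutator hg
  have hh₀ := deg_eq_zero_of_mem_commutator hh
  rw [Subgroup.mem_bot, commutatorElement_eq_one_iff_mul_comm]
  ext : 1 <;> simp [hg₀, hh₀, add_comm]

lemma deg_pow (g : MagnusGroup R) (n : ℕ) : (g ^ n).deg = n • g.deg :=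
  congrArg Multiplicative.toAdd (map_pow degHom g n)

lemma pow_eq_one_of_deg_eq_zero {g : MagnusGroup R} (hg : g.deg = 0) {k : ℕ} (hk : (k : R) = 0) :
    g ^ k = 1 := by
  have hpow : ∀ n : ℕ, g ^ n = ⟨n • g.dx, n • g.dy, 0⟩ := by
    intro n
    induction n with
    | zero => ext : 1 <;> simp
    | succ n ih => ext : 1 <;> simp [pow_succ, ih, hg, add_one_mul]
  rw [hpow, ← Nat.cast_smul_eq_nsmul R, ← Nat.cast_smul_eq_nsmul R, hk, zero_smul, zero_smul]
  rfl

section Commutator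

variable (g h : MagnusGroup R)

lemma commutator_dx : ⁅g, h⁆.dx = (1 - tpow h.deg) * g.dx + (tpow g.deg - 1) * h.dx := by
  simp only [commutatorElement_def, mul_dx, mul_deg, inv_dx, inv_deg, add_neg_cancel_comm,
    tpow_add]
  linear_combination (-(tpow h.deg) * g.dx) * tpow_neg_mul_tpow (R := R) g.deg
    - h.dx * tpow_neg_mul_tpow (R := R) h.deg

lemma commutator_dy : ⁅g, h⁆.dy = (1 - tpow h.deg) * g.dy + (tpow g.deg - 1) * h.dy := by
  simp only [commutatorElement_def, mul_dy, mul_deg, inv_dy, inv_deg, add_neg_cancel_comm,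
    tpow_add]
  linear_combination (-(tpow h.deg) * g.dy) * tpow_neg_mul_tpow (R := R) g.deg
    - h.dy * tpow_neg_mul_tpow (R := R) h.deg

lemma commutator_deg : ⁅g, h⁆.deg = 0 := by
  simp only [commutatorElement_def, mul_deg, inv_deg]
  abel

end Commutator

theorem commutator_ne_one [IsDomain R] {g h : MagnusGroup R} (hdet : g.deg.1 * h.deg.2 - g.deg.2 * h.deg.1 ≠ 0)
    (hfox : h.dx * (tpow (1, 0) - 1) + h.dy * (tpow (0, 1) - 1) = tpow h.deg - 1) :
    ⁅g, h⁆ ≠ 1 := by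
  intro hcomm
  set D := g.deg.1 * h.deg.2 - g.deg.2 * h.deg.1
  set σ := mapDomainRingHom R (adjugateHom g.deg h.deg)
  have hσ (v : ℤ × ℤ) : σ (tpow v) = tpow (adjugateHom g.deg h.deg v) := mapDomainRingHom_tpow _ v
  have hσg : σ (tpow g.deg) = tpow (D, 0) := by rw [hσ, adjugateHom_left]
  have hσh : σ (tpow h.deg) = tpow (0, D) := by rw [hσ, adjugateHom_right]
  have hdvd : ∀ A C : R[ℤ × ℤ], (1 - tpow h.deg) * A + (tpow g.deg - 1) * C = 0 →
      tpow (0, D) - 1 ∣ σ C := by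
    intro A C hAC
    have hσAC := congrArg σ hAC
    simp only [map_add, map_mul, map_sub, map_one, map_zero, hσg, hσh] at hσAC
    exact tpow_sub_one_dvd_of_mul_eq_mul hdet (W := σ A) (by linear_combination hσAC)
  obtain ⟨c₁, hc₁⟩ := hdvd _ _ (commutator_dx g h ▸ congrArg dx hcomm)
  obtain ⟨c₂, hc₂⟩ := hdvd _ _ (commutator_dy g h ▸ congrArg dy hcomm)
  have hσfox := congrArg σ hfox
  simp only [map_add, map_mul, map_sub, map_one, hσh, hc₁, hc₂, hσ] at hσfox
  have hne : (tpow (0, D) : R[ℤ × ℤ]) - 1 ≠ 0 := tpow_sub_one_ne_zero (by simpa using hdet)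
  exact mul_tpow_sub_one_add_mul_tpow_sub_one_ne_one c₁ c₂
    (adjugateHom g.deg h.deg (1, 0)) (adjugateHom g.deg h.deg (0, 1)) <|
    mul_left_cancel₀ hne (by linear_combination hσfox)

end MagnusGroup

section Magnus

variable (R : Type*) [CommRing R]

noncomputable def magnus : FreeGroup (Fin 2) →* MagnusGroup R :=
  FreeGroup.lift ![⟨1, 0, (1, 0)⟩, ⟨0, 1, (0, 1)⟩]

variable {R}

lemma magnus_deg (g : FreeGroup (Fin 2)) : (magnus R g).deg = (expx g, expy g) := by
  induction g using FreeGroup.induction_on with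
  | C1 => rfl
  | of i => fin_cases i <;> rfl
  | inv_of i ih =>
    rw [map_inv, MagnusGroup.inv_deg, ih]
    simp [expx, expy]
  | mul g h ihg ihh =>
    rw [map_mul, MagnusGroup.mul_deg, ihg, ihh]
    simp [expx, expy]

lemma magnus_fox (g : FreeGroup (Fin 2)) :
    (magnus R g).dx * (tpow (1, 0) - 1) + (magnus R g).dy * (tpow (0, 1) - 1)
      = tpow (magnus R g).deg - 1 := by
  induction g using FreeGroup.induction_on with
  | C1 => simp
  | of i => fin_cases i <;> simp [magnus]
  | inv_of i ih =>
    simp only [map_inv, MagnusGroup.inv_dx, MagnusGroup.inv_dy, MagnusGroup.inv_deg]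
    linear_combination -tpow (-(magnus R (.of i)).deg) * ih
      - tpow_neg_mul_tpow (R := R) (magnus R (.of i)).deg
  | mul g h ihg ihh =>
    simp only [map_mul, MagnusGroup.mul_dx, MagnusGroup.mul_dy, MagnusGroup.mul_deg, tpow_add]
    linear_combination ihg + tpow (magnus R g).deg * ihh

variable (R)

lemma magnus_eq_one_of_mem_derivedSeries_two {g : FreeGroup (Fin 2)}
    (hg : g ∈ derivedSeries (FreeGroup (Fin 2)) 2) : magnus R g = 1 := by
  have := map_derivedSeries_le_derivedSeries (magnus R) 2 (Subgroup.mem_map_of_mem _ hg)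
  rwa [MagnusGroup.derivedSeries_two_eq_bot, Subgroup.mem_bot] at this

theorem magnus_commutator_ne_one [IsDomain R] {w u : FreeGroup (Fin 2)}
    (h : expx w * expy u - expy w * expx u ≠ 0) : ⁅magnus R w, magnus R u⁆ ≠ 1 :=
  MagnusGroup.commutator_ne_one (by simpa [magnus_deg] using h) (magnus_fox u)

end Magnus

theorem stmt_8 (w u : FreeGroup (Fin 2))
    (h : expx w * expy u - expy w * expx u ≠ 0) (k : ℕ) (hk : 2 ≤ k) :
    ¬ ∃ z : FreeGroup (Fin 2),
      ⁅w, u⁆ * (z ^ k)⁻¹ ∈ derivedSeries (FreeGroup (Fin 2)) 2 := by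
  rintro ⟨z, hz⟩
  obtain ⟨p, hp, hpk⟩ := Nat.exists_prime_and_dvd (show k ≠ 1 by omega)
  have : Fact p.Prime := ⟨hp⟩
  have hψ := magnus_eq_one_of_mem_derivedSeries_two (ZMod p) hz
  rw [map_mul, map_inv, map_pow, mul_inv_eq_one, map_commutatorElement] at hψ
  have hz₀ : (magnus (ZMod p) z).deg = 0 := by
    have hdeg := congrArg MagnusGroup.deg hψ
    rw [MagnusGroup.commutator_deg, MagnusGroup.deg_pow, eq_comm, smul_eq_zero] at hdeg
    exact hdeg.resolve_left (by omega)
  apply magnus_commutator_ne_one (ZMod p) h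
  rw [hψ, MagnusGroup.pow_eq_one_of_deg_eq_zero hz₀ ((ZMod.natCast_eq_zero_iff k p).2 hpk)]
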